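/- Fix λ > 0. If z* = (w*, b*) is a local minimizer of (P_{0/1}), then there exists α* ∈ ℝ^m satisfying (KKT-PI) at z*: w* = Σ_{i=1}^m α*_i y_i x_i; α*_i ≥ 0 and α*_i u_i(z*) = 0 for all i ∈ I₀* := {i : u_i(z*) ≤ 0}; α*_i = 0 for all i ∉ I₀*; and Σ_i y_i α*_i = 0. -/

import Mathlib

/-!
Let `A = {i | u_i(z*) = 0}`. Along a direction `d = (d_w, d_b)` with
`y_i (⟨x_i, d_w⟩ + d_b) ≥ 0` for `i ∈ A`, no residual becomes positive for small steps
(the negative ones stay negative by continuity), so the 0/1 loss does not increase and local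
minimality forces `⟨w*, d_w⟩ ≥ 0`. By Farkas' lemma in `ℝⁿ × ℝ`, `(w*, 0)` is then a nonnegative
combination of the vectors `(y_i x_i, y_i)`, `i ∈ A`, which is (KKT-PI). Farkas' lemma follows
from hyperplane separation, since a finitely generated cone is closed: by the conic
Carathéodory theorem it is a finite union of linear images of orthants under injective maps.
-/

open scoped RealInnerProductSpace BigOperators

noncomputable section

/-- The 0/1 loss: `1` if `t > 0`, `0` otherwise. -/
def l01 (t : ℝ) : ℝ := if 0 < t then 1 else 0

/-- The ramp loss with parameter `γ`. -/
def ramp (γ t : ℝ) : ℝ := if γ < t then 1 else if 0 ≤ t then t else 0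

variable {n m : ℕ}

/-- The margin residual `u_i(z) = 1 - y_i (⟨w, x_i⟩ + b)` for `z = (w, b)`. -/
def uu (x : Fin m → EuclideanSpace ℝ (Fin n)) (y : Fin m → ℝ)
    (z : EuclideanSpace ℝ (Fin n) × ℝ) (i : Fin m) : ℝ :=
  1 - y i * (⟪z.1, x i⟫ + z.2)

/-- The 0/1-loss SVM objective `F_{0/1}`. -/
def F01 (x : Fin m → EuclideanSpace ℝ (Fin n)) (y : Fin m → ℝ) (lam : ℝ)
    (z : EuclideanSpace ℝ (Fin n) × ℝ) : ℝ :=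
  (1 / 2) * ‖z.1‖ ^ 2 + lam * ∑ i, l01 (uu x y z i)

/-- The hinge-loss SVM objective `F₁(z, c)`. -/
def F1 (x : Fin m → EuclideanSpace ℝ (Fin n)) (y : Fin m → ℝ)
    (c : EuclideanSpace ℝ (Fin m)) (z : EuclideanSpace ℝ (Fin n) × ℝ) : ℝ :=
  (1 / 2) * ‖z.1‖ ^ 2 + ∑ i, c i * max (uu x y z i) 0

/-- The dual quadratic objective `G(α) = (1/2)⟨α, Qα⟩ - Σ αᵢ`,
where `Q_{ij} = y_i y_j ⟨x_i, x_j⟩`. -/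
def Gfun (x : Fin m → EuclideanSpace ℝ (Fin n)) (y : Fin m → ℝ)
    (α : EuclideanSpace ℝ (Fin m)) : ℝ :=
  (1 / 2) * ∑ i, ∑ j, α i * (y i * y j * ⟪x i, x j⟫) * α j - ∑ i, α i

/-- The ℓ₀ "norm": the number of nonzero entries. -/
def norm0 (α : EuclideanSpace ℝ (Fin m)) : ℝ := (({i | α i ≠ 0} : Set (Fin m)).ncard : ℝ)

/-- Feasibility for the dual problem `(D_{0/1})`. -/
def DFeas (y : Fin m → ℝ) (α : EuclideanSpace ℝ (Fin m)) : Prop :=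
  (∀ i, 0 ≤ α i) ∧ ∑ i, y i * α i = 0

/-- `α*` is a local minimizer of the dual problem `(D_{0/1})` with parameter `μ`. -/
def DLocalMin (x : Fin m → EuclideanSpace ℝ (Fin n)) (y : Fin m → ℝ) (μ : ℝ)
    (αs : EuclideanSpace ℝ (Fin m)) : Prop :=
  DFeas y αs ∧ ∃ ε > 0, ∀ α : EuclideanSpace ℝ (Fin m), DFeas y α → dist α αs ≤ ε →
    Gfun x y αs + μ * norm0 αs ≤ Gfun x y α + μ * norm0 α

/-- The KKT system (KKT-T*) for `(D_I)` with `I = T* = {i : α*_i ≠ 0}`: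
`Qα* - 1 + u* + b* y = 0`; `α*_i ≥ 0`, `u*_i ≤ 0`, `α*_i u*_i = 0` on `T*`;
(`α*_i = 0` off `T*` holds by definition of `T*`); and `⟨y, α*⟩ = 0`. -/
def KKTT (x : Fin m → EuclideanSpace ℝ (Fin n)) (y : Fin m → ℝ)
    (αs us : EuclideanSpace ℝ (Fin m)) (bs : ℝ) : Prop :=
  (∀ i, (∑ j, (y i * y j * ⟪x i, x j⟫) * αs j) - 1 + us i + bs * y i = 0) ∧
  (∀ i, αs i ≠ 0 → 0 ≤ αs i ∧ us i ≤ 0 ∧ αs i * us i = 0) ∧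
  ∑ i, y i * αs i = 0

/-- The ramp-loss SVM objective of `(P_r)`. -/
def PrObj (x : Fin m → EuclideanSpace ℝ (Fin n)) (y : Fin m → ℝ) (ρ γ : ℝ)
    (z : EuclideanSpace ℝ (Fin n) × ℝ) : ℝ :=
  (1 / 2) * ‖z.1‖ ^ 2 + ρ * ∑ i, ramp γ (uu x y z i)

/-- The penalty objective of problem (pen). -/
def Pen (x : Fin m → EuclideanSpace ℝ (Fin n)) (y : Fin m → ℝ) (ρ γ : ℝ)
    (p : (EuclideanSpace ℝ (Fin n) × ℝ) × EuclideanSpace ℝ (Fin m)) : ℝ :=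
  (1 / 2) * ‖p.1.1‖ ^ 2 + ρ * ∑ i, |uu x y p.1 i - p.2 i| + ρ * γ * ∑ i, l01 (p.2 i)

/-- The smooth part `Φ(z, v)` of the penalty objective. -/
def Phi (x : Fin m → EuclideanSpace ℝ (Fin n)) (y : Fin m → ℝ) (ρ : ℝ)
    (p : (EuclideanSpace ℝ (Fin n) × ℝ) × EuclideanSpace ℝ (Fin m)) : ℝ :=
  (1 / 2) * ‖p.1.1‖ ^ 2 + ρ * ∑ i, |uu x y p.1 i - p.2 i|

/-- The KKT system (KKT-PI) for `(P_{0/1})` at `z*`. -/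
def KKTPI (x : Fin m → EuclideanSpace ℝ (Fin n)) (y : Fin m → ℝ)
    (zs : EuclideanSpace ℝ (Fin n) × ℝ) (αs : EuclideanSpace ℝ (Fin m)) : Prop :=
  zs.1 = ∑ i, (αs i * y i) • x i ∧
  (∀ i, uu x y zs i ≤ 0 → 0 ≤ αs i ∧ αs i * uu x y zs i = 0) ∧
  (∀ i, ¬ uu x y zs i ≤ 0 → αs i = 0) ∧
  ∑ i, y i * αs i = 0

section FiniteCone

variable {ι E : Type*} [Fintype ι]

theorem exists_nonneg_sub_smul_eq_zero {α g : ι → ℝ} (hα : 0 ≤ α) (hg : ∃ j, 0 < g j) :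
    ∃ θ : ℝ, 0 ≤ α - θ • g ∧ ∃ i, g i ≠ 0 ∧ (α - θ • g) i = 0 := by
  classical
  obtain ⟨j, hj⟩ := hg
  obtain ⟨i₀, hi₀, hmin⟩ :=
    Finset.exists_min_image {i | 0 < g i} (fun i => α i / g i) ⟨j, by simp [hj]⟩
  rw [Finset.mem_filter] at hi₀
  refine ⟨α i₀ / g i₀, fun i => ?_, i₀, hi₀.2.ne', ?_⟩
  · simp only [Pi.zero_apply, Pi.sub_apply, Pi.smul_apply, smul_eq_mul, sub_nonneg]
    rcases le_or_gt (g i) 0 with hgi | hgi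
    · exact (mul_nonpos_of_nonneg_of_nonpos (div_nonneg (hα i₀) hi₀.2.le) hgi).trans (hα i)
    · rw [← le_div_iff₀ hgi]
      exact hmin i (by simpa using hgi)
  · simp [div_mul_cancel₀ _ hi₀.2.ne']

theorem exists_pos_of_not_linearIndepOn [AddCommGroup E] [Module ℝ E] {v : ι → E} {s : Set ι}
    (hs : ¬LinearIndepOn ℝ v s) :
    ∃ g : ι → ℝ, ∑ i, g i • v i = 0 ∧ Function.support g ⊆ s ∧ ∃ j, 0 < g j := by
  classical
  rw [← Set.coe_toFinset s, not_linearIndepOn_finset_iff] at hs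
  obtain ⟨f, hf, j, hj, hfj⟩ := hs
  have hsum : ∑ i, s.indicator f i • v i = 0 := by
    rw [← hf, ← Finset.sum_subset (Finset.subset_univ s.toFinset) (fun i _ hi => by simp_all)]
    exact Finset.sum_congr rfl fun i hi => by simp_all
  rw [Set.mem_toFinset] at hj
  rcases hfj.lt_or_gt with hneg | hpos
  · refine ⟨-s.indicator f, by simp [neg_smul, hsum], ?_, j, ?_⟩
    · rw [Function.support_neg]
      exact Set.support_indicator_subset
    · simpa [Set.indicator_of_mem hj] using hneg
  · exact ⟨_, hsum, Set.support_indicator_subset, j, by simpa [Set.indicator_of_mem hj] using hpos⟩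

theorem exists_linearIndepOn_support_sum_eq [AddCommGroup E] [Module ℝ E] (v : ι → E)
    {α : ι → ℝ} (hα : 0 ≤ α) :
    ∃ β : ι → ℝ, 0 ≤ β ∧ LinearIndepOn ℝ v (Function.support β) ∧
      ∑ i, β i • v i = ∑ i, α i • v i := by
  classical
  induction hN : (Function.support α).toFinset.card using Nat.strong_induction_on generalizing α
    with
  | _ N ih =>
  by_cases hli : LinearIndepOn ℝ v (Function.support α)
  · exact ⟨α, hα, hli, rfl⟩
  obtain ⟨g, hgv, hgα, j, hj⟩ := exists_pos_of_not_linearIndepOn hli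
  obtain ⟨θ, hθ, i₀, hgi₀, hi₀⟩ := exists_nonneg_sub_smul_eq_zero hα ⟨j, hj⟩
  have hsupp : Function.support (α - θ • g) ⊆ Function.support α \ {i₀} := by
    intro i hi
    refine ⟨fun hαi => hi ?_, fun hii₀ => hi (by rwa [hii₀])⟩
    have : g i = 0 := Function.notMem_support.1 fun hgi => hgα hgi hαi
    simp [hαi, this]
  have hcard : (Function.support (α - θ • g)).toFinset.card < N := by
    rw [← hN]
    exact Finset.card_lt_card (Set.toFinset_ssubset_toFinset.2
      (hsupp.trans_ssubset (Set.sdiff_singleton_ssubset.2 (hgα hgi₀))))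
  obtain ⟨β, hβ, hli, hβsum⟩ := ih _ hcard hθ rfl
  refine ⟨β, hβ, hli, ?_⟩
  simp [hβsum, sub_smul, Finset.sum_sub_distrib, mul_smul, ← Finset.smul_sum, hgv]

theorem PointedCone.mem_hull_range_iff [AddCommGroup E] [Module ℝ E] {v : ι → E} {x : E} :
    x ∈ PointedCone.hull ℝ (Set.range v) ↔ ∃ α : ι → ℝ, 0 ≤ α ∧ ∑ i, α i • v i = x := by
  rw [Submodule.mem_span_range_iff_exists_fun]
  constructor
  · rintro ⟨c, rfl⟩
    exact ⟨fun i => c i, fun i => (c i).2, rfl⟩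
  · rintro ⟨α, hα, rfl⟩
    exact ⟨fun i => ⟨α i, hα i⟩, rfl⟩

theorem PointedCone.isClosed_hull_range [NormedAddCommGroup E] [NormedSpace ℝ E] [FiniteDimensional ℝ E]
    (v : ι → E) : IsClosed (PointedCone.hull ℝ (Set.range v) : Set E) := by
  classical
  have hunion : (PointedCone.hull ℝ (Set.range v) : Set E) =
      ⋃ (t : Finset ι) (_ : LinearIndepOn ℝ v t),
        Fintype.linearCombination ℝ (fun i : (t : Set ι) => v i) '' Set.Ici 0 := by
    ext x
    simp only [SetLike.mem_coe, Set.mem_iUnion, Set.mem_image, Set.mem_Ici]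
    constructor
    · rw [PointedCone.mem_hull_range_iff]
      rintro ⟨α, hα, rfl⟩
      obtain ⟨β, hβ, hli, hβα⟩ := exists_linearIndepOn_support_sum_eq v hα
      refine ⟨(Function.support β).toFinset, by simpa using hli, fun i => β i, fun i => hβ i, ?_⟩
      rw [Fintype.linearCombination_apply, ← hβα]
      exact (Finset.sum_coe_sort (Function.support β).toFinset fun i => β i • v i).trans
        (Finset.sum_subset (Finset.subset_univ _) fun i _ hi => by simp_all)
    · rintro ⟨t, -, γ, hγ, rfl⟩
      refine Submodule.sum_mem _ fun i _ => ?_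
      exact Submodule.smul_mem _ (⟨γ i, hγ i⟩ : {c : ℝ // 0 ≤ c}) (Submodule.subset_span ⟨i, rfl⟩)
  rw [hunion]
  exact isClosed_iUnion_of_finite fun t => isClosed_iUnion_of_finite fun ht =>
    (LinearMap.isClosedEmbedding_of_injective (LinearMap.ker_eq_bot.2
      ht.fintypeLinearCombination_injective)).isClosedMap _ isClosed_Ici

theorem exists_nonneg_sum_eq_of_forall_inner_nonneg [NormedAddCommGroup E] [InnerProductSpace ℝ E]
    [FiniteDimensional ℝ E] {v : ι → E} {c : E}
    (h : ∀ d : E, (∀ i, 0 ≤ ⟪v i, d⟫) → 0 ≤ ⟪c, d⟫) :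
    ∃ α : ι → ℝ, 0 ≤ α ∧ ∑ i, α i • v i = c := by
  rw [← PointedCone.mem_hull_range_iff]
  by_contra hc
  obtain ⟨d, hd, hcd⟩ :=
    ProperCone.hyperplane_separation' (⟨_, PointedCone.isClosed_hull_range v⟩ : ProperCone ℝ E) hc
  exact hcd.not_ge (h d fun i => hd _ (Submodule.subset_span ⟨i, rfl⟩))

theorem exists_nonneg_sum_eq_of_forall_mem_inner_nonneg [NormedAddCommGroup E]
    [InnerProductSpace ℝ E] [FiniteDimensional ℝ E] {v : ι → E} {c : E} (s : Finset ι)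
    (h : ∀ d : E, (∀ i ∈ s, 0 ≤ ⟪v i, d⟫) → 0 ≤ ⟪c, d⟫) :
    ∃ α : ι → ℝ, 0 ≤ α ∧ (∀ i ∉ s, α i = 0) ∧ ∑ i, α i • v i = c := by
  classical
  obtain ⟨α, hα, hsum⟩ := exists_nonneg_sum_eq_of_forall_inner_nonneg
    (v := fun i => if i ∈ s then v i else 0) fun d hd => h d fun i hi => by simpa [hi] using hd i
  refine ⟨fun i => if i ∈ s then α i else 0, fun i => ?_, fun i hi => if_neg hi, ?_⟩
  · dsimp only [Pi.zero_apply]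
    split_ifs
    exacts [hα i, le_rfl]
  · rw [← hsum]
    exact Finset.sum_congr rfl fun i _ => by by_cases hi : i ∈ s <;> simp [hi]

end FiniteCone

section ZeroOneLoss

open Filter Topology

variable (x : Fin m → EuclideanSpace ℝ (Fin n)) (y : Fin m → ℝ)

theorem l01_nonneg (t : ℝ) : 0 ≤ l01 t := by
  unfold l01; split_ifs <;> norm_num

theorem l01_le_one (t : ℝ) : l01 t ≤ 1 := by
  unfold l01; split_ifs <;> norm_num

theorem uu_add_smul (z d : EuclideanSpace ℝ (Fin n) × ℝ) (t : ℝ) (i : Fin m) :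
    uu x y (z + t • d) i = uu x y z i - t * (y i * (⟪d.1, x i⟫ + d.2)) := by
  simp only [uu, Prod.fst_add, Prod.snd_add, Prod.smul_fst, Prod.smul_snd, inner_add_left,
    real_inner_smul_left, smul_eq_mul]
  ring

theorem eventually_l01_uu_add_smul_le (z d : EuclideanSpace ℝ (Fin n) × ℝ) (i : Fin m)
    (hd : uu x y z i = 0 → 0 ≤ y i * (⟪d.1, x i⟫ + d.2)) :
    ∀ᶠ t in 𝓝[>] (0 : ℝ), l01 (uu x y (z + t • d) i) ≤ l01 (uu x y z i) := by
  rcases lt_trichotomy (uu x y z i) 0 with hneg | hzero | hpos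
  rotate_right
  · exact Eventually.of_forall fun t => by simpa [l01, hpos] using l01_le_one _
  all_goals
    suffices ∀ᶠ t in 𝓝[>] (0 : ℝ), uu x y (z + t • d) i ≤ 0 from
      this.mono fun t ht => by simpa [l01, not_lt.2 ht] using l01_nonneg _
    simp only [uu_add_smul]
  · have hcont : Tendsto (fun t : ℝ => uu x y z i - t * (y i * (⟪d.1, x i⟫ + d.2))) (𝓝 0)
        (𝓝 (uu x y z i)) :=
      (by fun_prop : Continuous fun t : ℝ => uu x y z i - t * (y i * (⟪d.1, x i⟫ + d.2))).tendsto'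
        0 _ (by simp)
    exact (hcont.eventually (eventually_le_nhds hneg)).filter_mono nhdsWithin_le_nhds
  · filter_upwards [self_mem_nhdsWithin] with t ht
    rw [hzero, zero_sub, neg_nonpos]
    exact mul_nonneg (le_of_lt ht) (hd hzero)

theorem eventually_sum_l01_uu_add_smul_le (z d : EuclideanSpace ℝ (Fin n) × ℝ)
    (hd : ∀ i, uu x y z i = 0 → 0 ≤ y i * (⟪d.1, x i⟫ + d.2)) :
    ∀ᶠ t in 𝓝[>] (0 : ℝ), ∑ i, l01 (uu x y (z + t • d) i) ≤ ∑ i, l01 (uu x y z i) :=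
  (eventually_all.2 fun i => eventually_l01_uu_add_smul_le x y z d i (hd i)).mono
    fun _ ht => Finset.sum_le_sum fun i _ => ht i

theorem inner_nonneg_of_eventually_norm_sq_le {F : Type*} [NormedAddCommGroup F]
    [InnerProductSpace ℝ F] {w v : F} (h : ∀ᶠ t in 𝓝[>] (0 : ℝ), ‖w‖ ^ 2 ≤ ‖w + t • v‖ ^ 2) :
    0 ≤ ⟪w, v⟫ := by
  have hlim : Tendsto (fun t : ℝ => 2 * ⟪w, v⟫ + t * ‖v‖ ^ 2) (𝓝[>] 0) (𝓝 (2 * ⟪w, v⟫)) :=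
    ((by fun_prop : Continuous fun t : ℝ => 2 * ⟪w, v⟫ + t * ‖v‖ ^ 2).tendsto' 0 _
      (by simp)).mono_left nhdsWithin_le_nhds
  have hslope : ∀ᶠ t in 𝓝[>] (0 : ℝ), 0 ≤ 2 * ⟪w, v⟫ + t * ‖v‖ ^ 2 := by
    filter_upwards [h, self_mem_nhdsWithin] with t ht (htpos : 0 < t)
    rw [norm_add_sq_real, real_inner_smul_right, norm_smul, mul_pow, Real.norm_eq_abs, sq_abs]
      at ht
    exact (mul_nonneg_iff_of_pos_left htpos).1 (by nlinarith)
  linarith [ge_of_tendsto hlim hslope]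

theorem inner_nonneg_of_isLocalMin {lam : ℝ} (hlam : 0 ≤ lam) {zs : EuclideanSpace ℝ (Fin n) × ℝ}
    (hmin : IsLocalMin (F01 x y lam) zs) (d : EuclideanSpace ℝ (Fin n) × ℝ)
    (hd : ∀ i, uu x y zs i = 0 → 0 ≤ y i * (⟪d.1, x i⟫ + d.2)) :
    0 ≤ ⟪zs.1, d.1⟫ := by
  have hpath : Tendsto (fun t : ℝ => zs + t • d) (𝓝[>] 0) (𝓝 zs) :=
    ((by fun_prop : Continuous fun t : ℝ => zs + t • d).tendsto' 0 _ (by simp)).mono_left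
      nhdsWithin_le_nhds
  refine inner_nonneg_of_eventually_norm_sq_le ?_
  filter_upwards [hpath.eventually hmin, eventually_sum_l01_uu_add_smul_le x y zs d hd]
    with t hF hloss
  simp only [F01, Prod.fst_add, Prod.smul_fst] at hF
  nlinarith [mul_le_mul_of_nonneg_left hloss hlam]

theorem exists_multipliers_of_isLocalMin {lam : ℝ} (hlam : 0 ≤ lam)
    {zs : EuclideanSpace ℝ (Fin n) × ℝ} (hmin : IsLocalMin (F01 x y lam) zs) :
    ∃ α : Fin m → ℝ, 0 ≤ α ∧ (∀ i, uu x y zs i ≠ 0 → α i = 0) ∧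
      ∑ i, α i • (y i • x i, y i) = (zs.1, 0) := by
  classical
  -- `WithLp 2` equips `ℝⁿ × ℝ` with the inner product `⟪(a, s), (b, t)⟫ = ⟪a, b⟫ + s * t`.
  have hdual : ∀ d : WithLp 2 (EuclideanSpace ℝ (Fin n) × ℝ),
      (∀ i ∈ ({i | uu x y zs i = 0} : Finset (Fin m)),
        0 ≤ ⟪WithLp.toLp 2 (y i • x i, y i), d⟫) → 0 ≤ ⟪WithLp.toLp 2 (zs.1, 0), d⟫ := by
    intro d hd
    simpa using inner_nonneg_of_isLocalMin x y hlam hmin (WithLp.ofLp d) fun i hi => by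
      simpa [real_inner_smul_left, real_inner_comm (x i), mul_add, mul_comm]
        using hd i (by simpa using hi)
  obtain ⟨α, hα, hsupp, hsum⟩ := exists_nonneg_sum_eq_of_forall_mem_inner_nonneg _ hdual
  refine ⟨α, hα, fun i hi => hsupp i (by simpa using hi), ?_⟩
  simpa using congrArg WithLp.ofLp hsum

end ZeroOneLoss

theorem stmt13_general {n m : ℕ}
    (x : Fin m → EuclideanSpace ℝ (Fin n)) (y : Fin m → ℝ)
    (lam : ℝ) (hlam : 0 < lam)
    (zs : EuclideanSpace ℝ (Fin n) × ℝ)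
    (hloc : ∃ ε > 0, ∀ z : EuclideanSpace ℝ (Fin n) × ℝ,
      dist z zs ≤ ε → F01 x y lam zs ≤ F01 x y lam z) :
    ∃ αs : EuclideanSpace ℝ (Fin m), KKTPI x y zs αs := by
  obtain ⟨ε, hε, hloc⟩ := hloc
  have hmin : IsLocalMin (F01 x y lam) zs :=
    Filter.mem_of_superset (Metric.closedBall_mem_nhds zs hε) fun z hz => hloc z hz
  obtain ⟨α, hα, hsupp, hsum⟩ := exists_multipliers_of_isLocalMin x y hlam.le hmin
  refine ⟨WithLp.toLp 2 α, ?_, fun i _ => ⟨hα i, ?_⟩, fun i hi => hsupp i ?_, ?_⟩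
  · simpa [Prod.fst_sum, mul_smul] using (congrArg Prod.fst hsum).symm
  · by_cases hi : uu x y zs i = 0
    · simp [hi]
    · simp [hsupp i hi]
  · exact fun h => hi h.le
  · simpa [Prod.snd_sum, mul_comm] using congrArg Prod.snd hsum

/-- every local minimizer `z*` of `(P_{0/1})` admits a multiplier `α*`
satisfying (KKT-PI) at `z*`. -/
theorem stmt13 {n m : ℕ} (hn : 0 < n) (hm : 0 < m)
    (x : Fin m → EuclideanSpace ℝ (Fin n)) (y : Fin m → ℝ)
    (hy : ∀ i, y i = 1 ∨ y i = -1)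
    (lam : ℝ) (hlam : 0 < lam)
    (zs : EuclideanSpace ℝ (Fin n) × ℝ)
    (hloc : ∃ ε > 0, ∀ z : EuclideanSpace ℝ (Fin n) × ℝ,
      dist z zs ≤ ε → F01 x y lam zs ≤ F01 x y lam z) :
    ∃ αs : EuclideanSpace ℝ (Fin m), KKTPI x y zs αs :=
  stmt13_general x y lam hlam zs hloc
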